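/- arXiv:1909.00853 — 3 statements merged into one kernel-verified Lean document; each statement's English description precedes it below -/
import Mathlib

section
/- Let S₁, S₂ be similarity matrices with degree matrices D₁, D₂ (all degrees positive). If v₁ is an eigenvector of I − 𝓛_{S₁} = D₁^{-1/2} S₁ D₁^{-1/2} with eigenvalue λ₁ and v₂ is an eigenvector of I − 𝓛_{S₂} = D₂^{-1/2} S₂ D₂^{-1/2} with eigenvalue λ₂, then v₁ ⊗ v₂ is an eigenvector of the normalized Laplacian 𝓛_{S₁⊗S₂} with eigenvalue 1 − λ₁λ₂. -/
open Matrix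
open scoped Kronecker BigOperators

/-- `D^{-1/2}` for the degree matrix of a similarity matrix `S`. -/
noncomputable def invSqrtDegree {n : Type*} [Fintype n] [DecidableEq n]
    (S : Matrix n n ℝ) : Matrix n n ℝ :=
  Matrix.diagonal fun i => (∑ j, S i j) ^ (-(1 / 2 : ℝ))

/-- The normalized Laplacian `𝓛 = I − D^{-1/2} S D^{-1/2}`. -/
noncomputable def normLaplacian {n : Type*} [Fintype n] [DecidableEq n]
    (S : Matrix n n ℝ) : Matrix n n ℝ :=
  1 - invSqrtDegree S * S * invSqrtDegree S

/-- The Kronecker product of vectors. -/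
def kronVec {n₁ n₂ : ℕ} (v₁ : Fin n₁ → ℝ) (v₂ : Fin n₂ → ℝ) : Fin n₁ × Fin n₂ → ℝ :=
  fun p => v₁ p.1 * v₂ p.2

lemma kron_mulVec {n₁ n₂ : ℕ} (A : Matrix (Fin n₁) (Fin n₁) ℝ) (B : Matrix (Fin n₂) (Fin n₂) ℝ)
    (v₁ : Fin n₁ → ℝ) (v₂ : Fin n₂ → ℝ) :
    (A ⊗ₖ B).mulVec (kronVec v₁ v₂) = kronVec (A.mulVec v₁) (B.mulVec v₂) := by
  funext p
  simp only [Matrix.mulVec, dotProduct, kronVec, Matrix.kroneckerMap_apply,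
    Fintype.sum_prod_type]
  rw [Finset.sum_mul_sum]
  exact Finset.sum_congr rfl fun j _ => Finset.sum_congr rfl fun k _ => by ring

lemma invSqrtDegree_kron {n₁ n₂ : ℕ}
    (S₁ : Matrix (Fin n₁) (Fin n₁) ℝ) (S₂ : Matrix (Fin n₂) (Fin n₂) ℝ)
    (hd₁ : ∀ i, 0 < ∑ j, S₁ i j) (hd₂ : ∀ i, 0 < ∑ j, S₂ i j) :
    invSqrtDegree (S₁ ⊗ₖ S₂) = invSqrtDegree S₁ ⊗ₖ invSqrtDegree S₂ := by
  unfold invSqrtDegree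
  rw [Matrix.diagonal_kronecker_diagonal]
  refine congrArg Matrix.diagonal ?_
  funext p
  have hsum : (∑ j, (S₁ ⊗ₖ S₂) p j) = (∑ j, S₁ p.1 j) * (∑ j, S₂ p.2 j) := by
    rw [Fintype.sum_prod_type, Finset.sum_mul]
    exact Finset.sum_congr rfl fun j _ => by rw [Finset.mul_sum]; rfl
  rw [hsum, Real.mul_rpow (hd₁ p.1).le (hd₂ p.2).le]

/-- If `v₁` is an eigenvector of `I − 𝓛_{S₁} = D₁^{-1/2} S₁ D₁^{-1/2}` with eigenvalue `μ₁`
and `v₂` is an eigenvector of `I − 𝓛_{S₂} = D₂^{-1/2} S₂ D₂^{-1/2}` with eigenvalue `μ₂`,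
then `v₁ ⊗ v₂` is an eigenvector of `𝓛_{S₁⊗S₂}` with eigenvalue `1 − μ₁ μ₂`. -/
theorem normLaplacian_kronecker_eigenvector {n₁ n₂ : ℕ}
    (S₁ : Matrix (Fin n₁) (Fin n₁) ℝ) (S₂ : Matrix (Fin n₂) (Fin n₂) ℝ)
    (hS₁ : S₁.IsSymm) (hS₂ : S₂.IsSymm)
    (hS₁0 : ∀ i j, 0 ≤ S₁ i j) (hS₂0 : ∀ i j, 0 ≤ S₂ i j)
    (hd₁ : ∀ i, 0 < ∑ j, S₁ i j) (hd₂ : ∀ i, 0 < ∑ j, S₂ i j)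
    (v₁ : Fin n₁ → ℝ) (v₂ : Fin n₂ → ℝ) (μ₁ μ₂ : ℝ)
    (hv₁ : v₁ ≠ 0) (hv₂ : v₂ ≠ 0)
    (he₁ : (invSqrtDegree S₁ * S₁ * invSqrtDegree S₁).mulVec v₁ = μ₁ • v₁)
    (he₂ : (invSqrtDegree S₂ * S₂ * invSqrtDegree S₂).mulVec v₂ = μ₂ • v₂) :
    kronVec v₁ v₂ ≠ 0 ∧
      (normLaplacian (S₁ ⊗ₖ S₂)).mulVec (kronVec v₁ v₂) = (1 - μ₁ * μ₂) • kronVec v₁ v₂ := by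
  constructor
  · obtain ⟨i, hi⟩ := Function.ne_iff.mp hv₁
    obtain ⟨j, hj⟩ := Function.ne_iff.mp hv₂
    intro h
    have := congrFun h (i, j)
    simp only [kronVec, Pi.zero_apply] at this hi hj
    exact (mul_ne_zero hi hj) this
  · have hM : invSqrtDegree (S₁ ⊗ₖ S₂) * (S₁ ⊗ₖ S₂) * invSqrtDegree (S₁ ⊗ₖ S₂)
        = (invSqrtDegree S₁ * S₁ * invSqrtDegree S₁) ⊗ₖ (invSqrtDegree S₂ * S₂ * invSqrtDegree S₂) := by
      rw [invSqrtDegree_kron S₁ S₂ hd₁ hd₂, ← Matrix.mul_kronecker_mul, ← Matrix.mul_kronecker_mul]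
    rw [normLaplacian, Matrix.sub_mulVec, hM, kron_mulVec, he₁, he₂, Matrix.one_mulVec]
    funext p
    simp only [kronVec, Pi.sub_apply, Pi.smul_apply, smul_eq_mul]
    ring
end

section
/- For A ∈ ℝ^{m×n} with m = m₁m₂, n = n₁n₂, and for any B ∈ ℝ^{m₁×n₁}, C ∈ ℝ^{m₂×n₂}, the Frobenius-norm identity ‖A − B ⊗ C‖_F = ‖𝓡(A) − vec(B) vec(C)ᵀ‖_F holds, where 𝓡 is the rearrangement (permuted-matrix) operator. -/
open Matrix
open scoped Kronecker BigOperators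

/-- The Frobenius norm of a real matrix. -/
noncomputable def frobNorm {α β : Type*} [Fintype α] [Fintype β]
    (M : Matrix α β ℝ) : ℝ :=
  Real.sqrt (∑ i, ∑ j, (M i j) ^ 2)

/-- The `vec` operator stacking the columns of a matrix into a single vector. -/
def vecOf {m n : ℕ} (B : Matrix (Fin m) (Fin n) ℝ) : Fin m × Fin n → ℝ :=
  fun p => B p.1 p.2

/-- The Van Loan–Pitsianis rearrangement operator `𝓡`: with `A` partitioned into
`m₂ × n₂` blocks `A_{ij}`, the rows of `𝓡(A)` are the vectors `vec(A_{ij})ᵀ`. -/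
def rearrange {m₁ m₂ n₁ n₂ : ℕ}
    (A : Matrix (Fin m₁ × Fin m₂) (Fin n₁ × Fin n₂) ℝ) :
    Matrix (Fin m₁ × Fin n₁) (Fin m₂ × Fin n₂) ℝ :=
  fun p q => A (p.1, q.1) (p.2, q.2)

/-
The rearrangement `𝓡` is linear and only permutes the entries of a matrix, so it preserves the
Frobenius norm; and it sends `B ⊗ C` to the rank-one matrix `vec(B) vec(C)ᵀ`.
-/

section Rearrange

variable {m₁ m₂ n₁ n₂ : ℕ}

theorem rearrange_sub (A A' : Matrix (Fin m₁ × Fin m₂) (Fin n₁ × Fin n₂) ℝ) :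
    rearrange (A - A') = rearrange A - rearrange A' :=
  rfl

theorem rearrange_kronecker (B : Matrix (Fin m₁) (Fin n₁) ℝ) (C : Matrix (Fin m₂) (Fin n₂) ℝ) :
    rearrange (B ⊗ₖ C) = vecMulVec (vecOf B) (vecOf C) :=
  rfl

theorem frobNorm_rearrange (A : Matrix (Fin m₁ × Fin m₂) (Fin n₁ × Fin n₂) ℝ) :
    frobNorm (rearrange A) = frobNorm A := by
  unfold frobNorm rearrange
  congr 1
  simp only [Fintype.sum_prod_type]
  exact Finset.sum_congr rfl fun _ _ => Finset.sum_comm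

end Rearrange

/-- Van Loan–Pitsianis rearrangement theorem:
`‖A − B ⊗ C‖_F = ‖𝓡(A) − vec(B) vec(C)ᵀ‖_F`. -/
theorem rearrangement_frobNorm {m₁ m₂ n₁ n₂ : ℕ}
    (A : Matrix (Fin m₁ × Fin m₂) (Fin n₁ × Fin n₂) ℝ)
    (B : Matrix (Fin m₁) (Fin n₁) ℝ) (C : Matrix (Fin m₂) (Fin n₂) ℝ) :
    frobNorm (A - B ⊗ₖ C) =
      frobNorm (rearrange A - Matrix.vecMulVec (vecOf B) (vecOf C)) := by
  rw [← rearrange_kronecker, ← rearrange_sub, frobNorm_rearrange]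
end

section
/- If A is a symmetric entrywise-nonnegative matrix of size m₁m₂ × m₁m₂ (with the symmetric blocking), then the factors B, C of the nearest Kronecker product obtained from the top singular triple of 𝓡(A) can be chosen symmetric and entrywise nonnegative. -/
open Matrix
open scoped Kronecker BigOperators

private lemma exists_max_ball {ι : Type*} [Fintype ι] (q : (ι → ℝ) → ℝ) (hq : Continuous q) :
    ∃ u : ι → ℝ, (∑ i, u i ^ 2) ≤ 1 ∧ ∀ x : ι → ℝ, (∑ i, x i ^ 2) ≤ 1 → q x ≤ q u := by
  have hcont : Continuous (fun x : ι → ℝ => ∑ i, x i ^ 2) :=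
    continuous_finset_sum _ fun i _ => (continuous_apply i).pow 2
  set K : Set (ι → ℝ) := {x | ∑ i, x i ^ 2 ≤ 1} with hK
  have hclosed : IsClosed K := isClosed_le hcont continuous_const
  have hsub : K ⊆ Set.pi Set.univ (fun _ : ι => Set.Icc (-1:ℝ) 1) := by
    intro x hx i _
    have h1 : x i ^ 2 ≤ 1 :=
      le_trans (Finset.single_le_sum (f := fun j => x j ^ 2)
        (fun j _ => sq_nonneg _) (Finset.mem_univ i)) hx
    constructor <;> nlinarith
  have hKc : IsCompact K :=
    (isCompact_univ_pi (fun _ => isCompact_Icc)).of_isClosed_subset hclosed hsub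
  have hne : K.Nonempty := ⟨0, by simp [hK]⟩
  obtain ⟨u, hu, hmax⟩ := hKc.exists_isMaxOn hne hq.continuousOn
  exact ⟨u, hu, fun x hx => hmax hx⟩

private lemma inner_S {ι κ : Type*} [Fintype ι] [Fintype κ] (M : ι → κ → ℝ) (x y : ι → ℝ) :
    ∑ q, (∑ p, M p q * x p) * (∑ p, M p q * y p)
      = ∑ p, y p * (∑ p', (∑ q, M p q * M p' q) * x p') := by
  have key : ∀ p : ι, y p * (∑ p', (∑ q, M p q * M p' q) * x p')
      = ∑ p', ∑ q, (M p q * y p) * (M p' q * x p') := by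
    intro p
    rw [Finset.mul_sum]
    refine Finset.sum_congr rfl fun p' _ => ?_
    rw [Finset.sum_mul, Finset.mul_sum]
    exact Finset.sum_congr rfl fun qq _ => by ring
  calc ∑ q, (∑ p, M p q * x p) * (∑ p, M p q * y p)
      = ∑ q, ∑ p, ∑ p', (M p q * y p) * (M p' q * x p') := by
        refine Finset.sum_congr rfl fun qq _ => ?_
        rw [mul_comm, Finset.sum_mul_sum]
    _ = ∑ p, ∑ q, ∑ p', (M p q * y p) * (M p' q * x p') := Finset.sum_comm
    _ = ∑ p, ∑ p', ∑ q, (M p q * y p) * (M p' q * x p') :=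
        Finset.sum_congr rfl fun p _ => Finset.sum_comm
    _ = ∑ p, y p * (∑ p', (∑ q, M p q * M p' q) * x p') :=
        Finset.sum_congr rfl fun p _ => (key p).symm

private lemma quad_coeff_zero {a b : ℝ} (ha : 0 ≤ a) (hb : 0 ≤ b)
    (h : ∀ s : ℝ, 0 ≤ 2 * s * a + s ^ 2 * b) : a = 0 := by
  by_contra hne
  have ha' : 0 < a := lt_of_le_of_ne ha (Ne.symm hne)
  have hb1 : (0:ℝ) < b + 1 := by linarith
  have hs := h (-(a / (b + 1)))
  have e : 2 * -(a / (b+1)) * a + (-(a/(b+1)))^2 * b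
      = (-2*a^2*(b+1) + a^2*b) / ((b+1)^2) := by
    field_simp
  rw [e] at hs
  have hd : (0:ℝ) < (b+1)^2 := by positivity
  have h4 : 0 ≤ (-2*a^2*(b+1) + a^2*b) := by
    have h5 := mul_nonneg hs hd.le
    rwa [div_mul_cancel₀ _ hd.ne'] at h5
  nlinarith [h4, mul_pos ha' ha']

private lemma frob_expand {m₁ m₂ : ℕ} (A : Matrix (Fin m₁ × Fin m₂) (Fin m₁ × Fin m₂) ℝ)
    (B : Matrix (Fin m₁) (Fin m₁) ℝ) (C : Matrix (Fin m₂) (Fin m₂) ℝ) :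
    frobNorm (A - B ⊗ₖ C) = Real.sqrt ((∑ p, ∑ q, A p q ^ 2)
      - 2 * (∑ p : Fin m₁ × Fin m₁, ∑ q : Fin m₂ × Fin m₂,
          A (p.1, q.1) (p.2, q.2) * B p.1 p.2 * C q.1 q.2)
      + (∑ i, ∑ j, B i j ^ 2) * (∑ k, ∑ l, C k l ^ 2)) := by
  unfold frobNorm
  congr 1
  have step1 : ∑ a, ∑ b, ((A - B ⊗ₖ C) a b) ^ 2
      = (∑ a, ∑ b, A a b ^ 2)
        - 2 * (∑ a : Fin m₁ × Fin m₂, ∑ b : Fin m₁ × Fin m₂,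
            A a b * B a.1 b.1 * C a.2 b.2)
        + (∑ a : Fin m₁ × Fin m₂, ∑ b : Fin m₁ × Fin m₂,
            B a.1 b.1 ^ 2 * C a.2 b.2 ^ 2) := by
    rw [Finset.mul_sum, ← Finset.sum_sub_distrib, ← Finset.sum_add_distrib]
    refine Finset.sum_congr rfl fun a _ => ?_
    rw [Finset.mul_sum, ← Finset.sum_sub_distrib, ← Finset.sum_add_distrib]
    refine Finset.sum_congr rfl fun b _ => ?_
    have : (A - B ⊗ₖ C) a b = A a b - B a.1 b.1 * C a.2 b.2 := by
      simp [Matrix.sub_apply, Matrix.kroneckerMap_apply]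
    rw [this]; ring
  rw [step1]
  have h1 : (∑ a : Fin m₁ × Fin m₂, ∑ b : Fin m₁ × Fin m₂,
        A a b * B a.1 b.1 * C a.2 b.2)
      = ∑ p : Fin m₁ × Fin m₁, ∑ q : Fin m₂ × Fin m₂,
          A (p.1, q.1) (p.2, q.2) * B p.1 p.2 * C q.1 q.2 := by
    simp only [Fintype.sum_prod_type]
    exact Finset.sum_congr rfl fun i _ => Finset.sum_comm
  have h2 : (∑ a : Fin m₁ × Fin m₂, ∑ b : Fin m₁ × Fin m₂,
        B a.1 b.1 ^ 2 * C a.2 b.2 ^ 2)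
      = (∑ i, ∑ j, B i j ^ 2) * (∑ k, ∑ l, C k l ^ 2) := by
    simp only [Fintype.sum_prod_type]
    rw [Finset.sum_mul]
    refine Finset.sum_congr rfl fun i _ => ?_
    rw [Finset.sum_comm, Finset.sum_mul]
    refine Finset.sum_congr rfl fun j _ => ?_
    simp [Finset.mul_sum]
  rw [h1, h2]

private lemma final_ineq {SA lam g bb cc : ℝ} (hg2 : g ^ 2 ≤ (lam * bb) * cc)
    (hb0 : 0 ≤ bb) (hc0 : 0 ≤ cc) (hl : 0 ≤ lam) :
    SA - 2 * lam + lam ≤ SA - 2 * g + bb * cc := by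
  nlinarith [hg2, hb0, hc0, hl, sq_nonneg (bb * cc - lam), mul_nonneg hb0 hc0]

/-- If `A` is a symmetric entrywise-nonnegative matrix of size `m₁m₂ × m₁m₂` (with
the symmetric blocking), then the factors `B`, `C` of the nearest Kronecker product
can be chosen symmetric and entrywise nonnegative. -/
theorem nearest_kronecker_symm_nonneg {m₁ m₂ : ℕ}
    (A : Matrix (Fin m₁ × Fin m₂) (Fin m₁ × Fin m₂) ℝ)
    (hA : A.IsSymm) (hA0 : ∀ p q, 0 ≤ A p q) :
    ∃ (B : Matrix (Fin m₁) (Fin m₁) ℝ) (C : Matrix (Fin m₂) (Fin m₂) ℝ),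
      B.IsSymm ∧ C.IsSymm ∧ (∀ i j, 0 ≤ B i j) ∧ (∀ k l, 0 ≤ C k l) ∧
      ∀ (B' : Matrix (Fin m₁) (Fin m₁) ℝ) (C' : Matrix (Fin m₂) (Fin m₂) ℝ),
        frobNorm (A - B ⊗ₖ C) ≤ frobNorm (A - B' ⊗ₖ C') := by
  classical
  set M : (Fin m₁ × Fin m₁) → (Fin m₂ × Fin m₂) → ℝ :=
    fun p q => A (p.1, q.1) (p.2, q.2) with hMdef
  have hM' : ∀ p q, A (p.1, q.1) (p.2, q.2) = M p q := fun _ _ => rfl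
  have hM0 : ∀ p q, 0 ≤ M p q := fun p q => hA0 _ _
  set S : (Fin m₁ × Fin m₁) → (Fin m₁ × Fin m₁) → ℝ :=
    fun p p' => ∑ q, M p q * M p' q with hSdef
  have hS' : ∀ p p', (∑ q, M p q * M p' q) = S p p' := fun _ _ => rfl
  set qf : ((Fin m₁ × Fin m₁) → ℝ) → ℝ :=
    fun x => ∑ q, (∑ p, M p q * x p) ^ 2 with hqfdef
  have hqf' : ∀ x, qf x = ∑ q, (∑ p, M p q * x p) ^ 2 := fun _ => rfl
  have hqf_inner : ∀ x : (Fin m₁ × Fin m₁) → ℝ,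
      qf x = ∑ p, x p * (∑ p', S p p' * x p') := by
    intro x
    have h := inner_S M x x
    simp only [hS'] at h
    rw [hqf']
    simp only [pow_two]
    exact h
  have hqfc : Continuous qf := by
    rw [hqfdef]
    refine continuous_finset_sum _ fun q _ => Continuous.pow ?_ 2
    exact continuous_finset_sum _ fun p _ => continuous_const.mul (continuous_apply p)
  obtain ⟨u₀, hu₀K, hu₀max⟩ := exists_max_ball qf hqfc
  set lam := qf u₀ with hlamdef
  have hqfnn : ∀ x, 0 ≤ qf x := fun x => Finset.sum_nonneg fun q _ => sq_nonneg _
  have hlam0 : 0 ≤ lam := hqfnn u₀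
  have hscale : ∀ (c : ℝ) (x : (Fin m₁ × Fin m₁) → ℝ),
      qf (fun p => c * x p) = c ^ 2 * qf x := by
    intro c x
    rw [hqf', hqf', Finset.mul_sum]
    refine Finset.sum_congr rfl fun q _ => ?_
    have h : (∑ p, M p q * (c * x p)) = c * ∑ p, M p q * x p := by
      rw [Finset.mul_sum]; exact Finset.sum_congr rfl fun p _ => by ring
    rw [h]; ring
  have hbound : ∀ x : (Fin m₁ × Fin m₁) → ℝ, qf x ≤ lam * ∑ p, x p ^ 2 := by
    intro x
    rcases (Finset.sum_nonneg fun p (_ : p ∈ Finset.univ) => sq_nonneg (x p)).eq_or_lt with h | h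
    · have hx0 : ∀ p, x p = 0 := by
        intro p
        have h0 := (Finset.sum_eq_zero_iff_of_nonneg
          (fun p _ => sq_nonneg (x p))).mp h.symm p (Finset.mem_univ p)
        exact pow_eq_zero_iff two_ne_zero |>.mp h0
      have hq0 : qf x = 0 := by
        rw [hqf']
        refine Finset.sum_eq_zero fun q _ => ?_
        rw [Finset.sum_eq_zero fun p _ => by rw [hx0 p, mul_zero]]
        exact zero_pow two_ne_zero
      rw [hq0, ← h, mul_zero]
    · have hder : (∑ p, ((Real.sqrt (∑ p', x p' ^ 2))⁻¹ * x p) ^ 2) = 1 := by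
        have hc : ∀ p, ((Real.sqrt (∑ p', x p' ^ 2))⁻¹ * x p) ^ 2
            = (∑ p', x p' ^ 2)⁻¹ * x p ^ 2 := by
          intro p
          rw [mul_pow, ← Real.sqrt_inv, Real.sq_sqrt (inv_nonneg.mpr h.le)]
        rw [Finset.sum_congr rfl fun p _ => hc p, ← Finset.mul_sum,
          inv_mul_cancel₀ h.ne']
      have hmax := hu₀max _ (le_of_eq hder)
      rw [hscale] at hmax
      have hinv : ((Real.sqrt (∑ p', x p' ^ 2))⁻¹) ^ 2 = (∑ p', x p' ^ 2)⁻¹ := by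
        rw [← Real.sqrt_inv, Real.sq_sqrt (inv_nonneg.mpr h.le)]
      rw [hinv] at hmax
      calc qf x = (∑ p', x p' ^ 2) * ((∑ p', x p' ^ 2)⁻¹ * qf x) := by
            field_simp
        _ ≤ (∑ p', x p' ^ 2) * lam := mul_le_mul_of_nonneg_left hmax h.le
        _ = lam * ∑ p, x p ^ 2 := mul_comm _ _
  rcases hlam0.eq_or_lt with hlz | hlpos
  · -- degenerate case: lam = 0, so M = 0 and A = 0
    have hMzero : ∀ p q, M p q = 0 := by
      intro p q
      have hle := hbound (fun p' => if p' = p then (1:ℝ) else 0)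
      have hes : (∑ p', (if p' = p then (1:ℝ) else 0) ^ 2) = 1 := by
        simp
      have hqe : qf (fun p' => if p' = p then (1:ℝ) else 0) = ∑ q', M p q' ^ 2 := by
        rw [hqf']
        refine Finset.sum_congr rfl fun q' _ => ?_
        congr 1
        simp
      rw [hes, hqe, ← hlz, zero_mul] at hle
      have h1 : M p q ^ 2 ≤ 0 :=
        le_trans (Finset.single_le_sum (f := fun q' => M p q' ^ 2)
          (fun q' _ => sq_nonneg _) (Finset.mem_univ q)) hle
      nlinarith [sq_nonneg (M p q)]
    have hA0' : ∀ a b, A a b = 0 := by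
      intro a b
      have h := hMzero (a.1, b.1) (a.2, b.2)
      simpa [hMdef] using h
    refine ⟨0, 0, by simp [Matrix.IsSymm], by simp [Matrix.IsSymm],
      fun i j => le_refl 0, fun k l => le_refl 0, fun B' C' => ?_⟩
    have hz : frobNorm (A - (0 : Matrix (Fin m₁) (Fin m₁) ℝ) ⊗ₖ (0 : Matrix (Fin m₂) (Fin m₂) ℝ)) = 0 := by
      have hzero : A - (0 : Matrix (Fin m₁) (Fin m₁) ℝ) ⊗ₖ (0 : Matrix (Fin m₂) (Fin m₂) ℝ) = 0 := by
        ext a b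
        simp [Matrix.sub_apply, Matrix.kroneckerMap_apply, hA0' a b]
      rw [hzero]
      simp [frobNorm]
    rw [hz]
    exact Real.sqrt_nonneg _
  · -- main case: lam > 0
    have hu₀sum : ∑ p, u₀ p ^ 2 = 1 := by
      have hb := hbound u₀
      rw [← hlamdef] at hb
      exact le_antisymm hu₀K (by nlinarith)
    set u : (Fin m₁ × Fin m₁) → ℝ := fun p => |u₀ p| with hudef
    have hu0 : ∀ p, 0 ≤ u p := fun p => abs_nonneg _
    have husum : ∑ p, u p ^ 2 = 1 := by
      simp only [hudef, sq_abs]; exact hu₀sum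
    have hqu : qf u = lam := by
      refine le_antisymm (hu₀max u husum.le) ?_
      rw [hlamdef, hqf', hqf']
      refine Finset.sum_le_sum fun q _ => ?_
      have habs : |∑ p, M p q * u₀ p| ≤ ∑ p, M p q * u p := by
        refine le_trans (Finset.abs_sum_le_sum_abs _ _) ?_
        refine Finset.sum_le_sum fun p _ => ?_
        rw [abs_mul, abs_of_nonneg (hM0 p q)]
      have h2 : (0:ℝ) ≤ ∑ p, M p q * u p := le_trans (abs_nonneg _) habs
      nlinarith [abs_nonneg (∑ p, M p q * u₀ p), sq_abs (∑ p, M p q * u₀ p)]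
    -- the eigenvector equation
    set r : (Fin m₁ × Fin m₁) → ℝ := fun p => lam * u p - ∑ p', S p p' * u p' with hrdef
    have hSu_r : ∀ p, ∑ p', S p p' * u p' = lam * u p - r p := by
      intro p; simp only [hrdef]; ring
    have hcross_ur : ∑ q, (∑ p, M p q * u p) * (∑ p, M p q * r p)
        = lam * (∑ p, r p * u p) - ∑ p, r p ^ 2 := by
      have h := inner_S M u r
      simp only [hS'] at h
      rw [h]
      rw [Finset.sum_congr rfl fun p _ => by rw [hSu_r p]]
      rw [Finset.mul_sum, ← Finset.sum_sub_distrib]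
      refine Finset.sum_congr rfl fun p _ => by ring
    have hquadineq : ∀ s : ℝ,
        0 ≤ 2 * s * (∑ p, r p ^ 2) + s ^ 2 * (lam * (∑ p, r p ^ 2) - qf r) := by
      intro s
      have hkey := hbound (fun p => u p + s * r p)
      have hqfexp : qf (fun p => u p + s * r p)
          = lam + 2 * (s * (lam * (∑ p, r p * u p) - ∑ p, r p ^ 2)) + s ^ 2 * qf r := by
        rw [hqf']
        have hsplit : ∀ q, (∑ p, M p q * (u p + s * r p))
            = (∑ p, M p q * u p) + s * (∑ p, M p q * r p) := by
          intro q
          rw [Finset.mul_sum, ← Finset.sum_add_distrib]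
          exact Finset.sum_congr rfl fun p _ => by ring
        calc ∑ q, (∑ p, M p q * (u p + s * r p)) ^ 2
            = ∑ q, ((∑ p, M p q * u p) ^ 2
                + 2 * s * ((∑ p, M p q * u p) * (∑ p, M p q * r p))
                + s ^ 2 * (∑ p, M p q * r p) ^ 2) := by
              refine Finset.sum_congr rfl fun q _ => ?_
              rw [hsplit q]; ring
          _ = (∑ q, (∑ p, M p q * u p) ^ 2)
                + 2 * s * (∑ q, (∑ p, M p q * u p) * (∑ p, M p q * r p))
                + s ^ 2 * (∑ q, (∑ p, M p q * r p) ^ 2) := by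
              rw [Finset.sum_add_distrib, Finset.sum_add_distrib,
                ← Finset.mul_sum, ← Finset.mul_sum]
          _ = lam + 2 * (s * (lam * (∑ p, r p * u p) - ∑ p, r p ^ 2)) + s ^ 2 * qf r := by
              rw [hcross_ur, ← hqf', ← hqf', hqu]; ring
      have hsum_exp : ∑ p, (u p + s * r p) ^ 2
          = 1 + 2 * s * (∑ p, r p * u p) + s ^ 2 * (∑ p, r p ^ 2) := by
        calc ∑ p, (u p + s * r p) ^ 2
            = ∑ p, (u p ^ 2 + 2 * s * (r p * u p) + s ^ 2 * r p ^ 2) :=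
              Finset.sum_congr rfl fun p _ => by ring
          _ = (∑ p, u p ^ 2) + 2 * s * (∑ p, r p * u p) + s ^ 2 * (∑ p, r p ^ 2) := by
              rw [Finset.sum_add_distrib, Finset.sum_add_distrib,
                ← Finset.mul_sum, ← Finset.mul_sum]
          _ = 1 + 2 * s * (∑ p, r p * u p) + s ^ 2 * (∑ p, r p ^ 2) := by rw [husum]
      rw [hqfexp, hsum_exp] at hkey
      nlinarith [hkey]
    have hrsum0 : ∑ p, r p ^ 2 = 0 := by
      refine quad_coeff_zero (Finset.sum_nonneg fun p _ => sq_nonneg _) ?_ hquadineq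
      have := hbound r; linarith
    have hr0 : ∀ p, r p = 0 := by
      intro p
      have h0 := (Finset.sum_eq_zero_iff_of_nonneg
        (fun p _ => sq_nonneg (r p))).mp hrsum0 p (Finset.mem_univ p)
      exact pow_eq_zero_iff two_ne_zero |>.mp h0
    have hSu : ∀ p, ∑ p', S p p' * u p' = lam * u p := by
      intro p
      have h := hr0 p
      simp only [hrdef] at h
      linarith
    -- symmetry of S under simultaneous swap
    have hSswap : ∀ i j i' j', S (i,j) (i',j') = S (j,i) (j',i') := by
      intro i j i' j'
      rw [← hS', ← hS']
      simp only [hMdef, Fintype.sum_prod_type]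
      conv_rhs => rw [Finset.sum_comm]
      refine Finset.sum_congr rfl fun k _ => Finset.sum_congr rfl fun l _ => ?_
      rw [hA.apply (i,k) (j,l), hA.apply (i',k) (j',l)]
    -- the symmetric nonnegative eigenvector
    set w : (Fin m₁ × Fin m₁) → ℝ := fun p => u p + u (p.2, p.1) with hwdef
    have hw0 : ∀ p, 0 ≤ w p := fun p => add_nonneg (hu0 _) (hu0 _)
    have hwsym : ∀ i j, w (i,j) = w (j,i) := by
      intro i j; simp only [hwdef]; exact add_comm _ _
    have hSw : ∀ p, ∑ p', S p p' * w p' = lam * w p := by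
      rintro ⟨c, dd⟩
      have hsplit : ∑ p', S (c,dd) p' * w p'
          = (∑ p', S (c,dd) p' * u p') + ∑ p', S (c,dd) p' * u (p'.2, p'.1) := by
        rw [← Finset.sum_add_distrib]
        refine Finset.sum_congr rfl fun p' _ => ?_
        simp only [hwdef]; ring
      rw [hsplit, hSu (c,dd)]
      have hswap : ∑ p', S (c,dd) p' * u (p'.2, p'.1)
          = ∑ p', S (dd,c) p' * u p' := by
        refine Fintype.sum_equiv (Equiv.prodComm _ _) _ _ ?_
        rintro ⟨a, b⟩
        simpa using congrArg (· * u (b,a)) (hSswap c dd a b)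
      rw [hswap, hSu (dd,c)]
      simp only [hwdef]
      ring
    -- w is nonzero
    have hune : ∃ p, 0 < u p := by
      by_contra hcon
      push_neg at hcon
      have hzz : ∀ p, u p = 0 := fun p => le_antisymm (hcon p) (hu0 p)
      simp [hzz] at husum
    obtain ⟨p₀, hp₀⟩ := hune
    set d := ∑ p, w p ^ 2 with hddef
    have hdpos : 0 < d := by
      have h1 : 0 < w p₀ := by
        have := hu0 (p₀.2, p₀.1)
        simp only [hwdef]
        nlinarith
      have h2 : w p₀ ^ 2 ≤ d :=
        Finset.single_le_sum (f := fun p => w p ^ 2)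
          (fun p _ => sq_nonneg _) (Finset.mem_univ p₀)
      nlinarith
    set v : (Fin m₂ × Fin m₂) → ℝ := fun q => ∑ p, M p q * w p with hvdef
    have hv' : ∀ q, (∑ p, M p q * w p) = v q := fun _ => rfl
    have hv0 : ∀ q, 0 ≤ v q :=
      fun q => Finset.sum_nonneg fun p _ => mul_nonneg (hM0 p q) (hw0 p)
    have hvsym : ∀ k l, v (k,l) = v (l,k) := by
      intro k l
      rw [← hv' (k,l), ← hv' (l,k)]
      simp only [hMdef]
      calc ∑ p : Fin m₁ × Fin m₁, A (p.1, k) (p.2, l) * w p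
          = ∑ p : Fin m₁ × Fin m₁, A (p.2, l) (p.1, k) * w p :=
            Finset.sum_congr rfl fun p _ => by rw [hA.apply (p.1, k) (p.2, l)]
        _ = ∑ p : Fin m₁ × Fin m₁, A (p.1, l) (p.2, k) * w (p.2, p.1) := by
            refine Fintype.sum_equiv (Equiv.prodComm _ _) _ _ ?_
            rintro ⟨a, b⟩
            rfl
        _ = ∑ p : Fin m₁ × Fin m₁, A (p.1, l) (p.2, k) * w p :=
            Finset.sum_congr rfl fun p _ =>
              congrArg (A (p.1, l) (p.2, k) * ·) (hwsym p.2 p.1)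
    have hwSw : ∑ p, w p * (∑ p', S p p' * w p') = lam * d := by
      rw [Finset.sum_congr rfl fun p _ => by rw [hSw p]]
      rw [hddef, Finset.mul_sum]
      exact Finset.sum_congr rfl fun p _ => by ring
    have hqfw : qf w = lam * d := by rw [hqf_inner w, hwSw]
    have hvv : ∑ q, v q ^ 2 = lam * d := by
      rw [← hqfw, hqf']
    -- the candidate matrices
    refine ⟨Matrix.of (fun i j => w (i,j)), Matrix.of (fun k l => v (k,l) / d),
      ?_, ?_, ?_, ?_, ?_⟩
    · ext i j
      exact hwsym j i
    · ext k l
      simp only [Matrix.transpose_apply, Matrix.of_apply]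
      rw [hvsym l k]
    · intro i j; exact hw0 (i,j)
    · intro k l; exact div_nonneg (hv0 (k,l)) hdpos.le
    · intro B' C'
      rw [frob_expand, frob_expand]
      apply Real.sqrt_le_sqrt
      -- our cross term equals lam
      have hG : (∑ p : Fin m₁ × Fin m₁, ∑ q : Fin m₂ × Fin m₂,
          A (p.1, q.1) (p.2, q.2) * (Matrix.of (fun i j => w (i,j))) p.1 p.2
            * (Matrix.of (fun k l => v (k,l) / d)) q.1 q.2) = lam := by
        simp only [Matrix.of_apply, hM']
        calc ∑ p : Fin m₁ × Fin m₁, ∑ q : Fin m₂ × Fin m₂,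
              M p q * w (p.1, p.2) * (v (q.1, q.2) / d)
            = ∑ q : Fin m₂ × Fin m₂, ∑ p : Fin m₁ × Fin m₁,
              M p q * w p * (v q / d) := Finset.sum_comm
          _ = ∑ q, v q * (v q / d) := by
              refine Finset.sum_congr rfl fun q _ => ?_
              rw [← Finset.sum_mul, hv' q]
          _ = (∑ q, v q ^ 2) / d := by
              rw [Finset.sum_div]
              exact Finset.sum_congr rfl fun q _ => by ring
          _ = lam := by rw [hvv]; field_simp
      have hβ : (∑ i, ∑ j, ((Matrix.of (fun i j => w (i,j))) i j) ^ 2) = d := by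
        simp only [Matrix.of_apply]
        rw [hddef, Fintype.sum_prod_type]
      have hγ : (∑ k, ∑ l, ((Matrix.of (fun k l => v (k,l) / d)) k l) ^ 2) = lam / d := by
        simp only [Matrix.of_apply]
        have : ∑ k, ∑ l, (v (k,l) / d) ^ 2 = (∑ q, v q ^ 2) / d ^ 2 := by
          rw [Fintype.sum_prod_type, Finset.sum_div]
          refine Finset.sum_congr rfl fun k _ => ?_
          rw [Finset.sum_div]
          exact Finset.sum_congr rfl fun l _ => by ring
        rw [this, hvv]
        field_simp
      rw [hG, hβ, hγ]
      have hdl : d * (lam / d) = lam := by field_simp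
      rw [hdl]
      -- bound on the competitor's cross term
      have hg2 : (∑ p : Fin m₁ × Fin m₁, ∑ q : Fin m₂ × Fin m₂,
            A (p.1, q.1) (p.2, q.2) * B' p.1 p.2 * C' q.1 q.2) ^ 2
          ≤ (lam * ∑ p : Fin m₁ × Fin m₁, (B' p.1 p.2) ^ 2)
              * ∑ q : Fin m₂ × Fin m₂, (C' q.1 q.2) ^ 2 := by
        have hrw : (∑ p : Fin m₁ × Fin m₁, ∑ q : Fin m₂ × Fin m₂,
              A (p.1, q.1) (p.2, q.2) * B' p.1 p.2 * C' q.1 q.2)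
            = ∑ q : Fin m₂ × Fin m₂,
                (∑ p : Fin m₁ × Fin m₁, M p q * B' p.1 p.2) * C' q.1 q.2 := by
          simp only [hM']
          rw [Finset.sum_comm]
          exact Finset.sum_congr rfl fun q _ => by rw [Finset.sum_mul]
        rw [hrw]
        calc (∑ q : Fin m₂ × Fin m₂,
              (∑ p : Fin m₁ × Fin m₁, M p q * B' p.1 p.2) * C' q.1 q.2) ^ 2
            ≤ (∑ q : Fin m₂ × Fin m₂, (∑ p : Fin m₁ × Fin m₁, M p q * B' p.1 p.2) ^ 2)
                * ∑ q : Fin m₂ × Fin m₂, (C' q.1 q.2) ^ 2 :=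
              Finset.sum_mul_sq_le_sq_mul_sq _ _ _
          _ ≤ (lam * ∑ p : Fin m₁ × Fin m₁, (B' p.1 p.2) ^ 2)
                * ∑ q : Fin m₂ × Fin m₂, (C' q.1 q.2) ^ 2 := by
              refine mul_le_mul_of_nonneg_right ?_
                (Finset.sum_nonneg fun q _ => sq_nonneg _)
              have := hbound (fun p => B' p.1 p.2)
              rw [hqf'] at this
              exact this
      have hβ' : (∑ i, ∑ j, B' i j ^ 2) = ∑ p : Fin m₁ × Fin m₁, (B' p.1 p.2) ^ 2 := by
        rw [Fintype.sum_prod_type]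
      have hγ' : (∑ k, ∑ l, C' k l ^ 2) = ∑ q : Fin m₂ × Fin m₂, (C' q.1 q.2) ^ 2 := by
        rw [Fintype.sum_prod_type]
      rw [hβ', hγ']
      have hb0 : 0 ≤ ∑ p : Fin m₁ × Fin m₁, (B' p.1 p.2) ^ 2 :=
        Finset.sum_nonneg fun p _ => sq_nonneg _
      have hc0 : 0 ≤ ∑ q : Fin m₂ × Fin m₂, (C' q.1 q.2) ^ 2 :=
        Finset.sum_nonneg fun q _ => sq_nonneg _
      exact final_ineq hg2 hb0 hc0 hlpos.le
end
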